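/- Let G be a graph on n vertices and x* a feasible point of the cut LP (x*(δ(S)) ≥ 2 for every nonempty proper subset S of V) that is an extreme point. Then the number of edges e with 0 < x*(e) < 1 is at most 2n - 1. -/

import Mathlib

/-!
Fix a root `r` and a maximal laminar family `ℒ` of tight cuts avoiding `r`. Uncrossing (the
incidence vectors of `δ(S ∩ T)` and `δ(S ∪ T)` sum to at most those of `δ(S)` and `δ(T)`, with
equality on the support of `x` when `S` and `T` are tight and cross) shows, by induction on the number of members of `ℒ` crossed, that every
tight cut is orthogonal to each direction `d` that is supported on the fractional edges and
orthogonal to the cuts of `ℒ`. A laminar family of nonempty subsets of the `n - 1` vertices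
other than `r` has at most `2(n - 1) - 1` members, so with more fractional edges than that a
nonzero such `d` exists, and `x ± t • d` are feasible for small `t > 0`, contradicting
extremality.
-/

open Finset Matrix

section Laminar

variable {α : Type*}

def Crosses (S T : Finset α) : Prop := ¬S ⊆ T ∧ ¬T ⊆ S ∧ ¬Disjoint S T

instance [DecidableEq α] : DecidableRel (Crosses (α := α)) := fun S T => by
  unfold Crosses; infer_instance

def IsLaminar (ℒ : Finset (Finset α)) : Prop := ∀ S ∈ ℒ, ∀ T ∈ ℒ, ¬Crosses S T

theorem Crosses.symm {S T : Finset α} (h : Crosses S T) : Crosses T S :=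
  ⟨h.2.1, h.1, fun hd => h.2.2 hd.symm⟩

theorem not_crosses_of_subset_left {S T : Finset α} (h : S ⊆ T) : ¬Crosses S T :=
  fun hc => hc.1 h

theorem not_crosses_of_subset_right {S T : Finset α} (h : T ⊆ S) : ¬Crosses S T :=
  fun hc => hc.2.1 h

theorem Crosses.of_inter [DecidableEq α] {R S T : Finset α} (hRT : ¬Crosses R T)
    (hST : Crosses S T)    (h : Crosses (S ∩ T) R) : Crosses S R := by
  simp only [Crosses, not_and_or, not_not, Finset.subset_iff, Finset.disjoint_left,
    Finset.mem_inter] at *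
  grind

theorem Crosses.of_union [DecidableEq α] {R S T : Finset α} (hRT : ¬Crosses R T)
    (hST : Crosses S T)    (h : Crosses (S ∪ T) R) : Crosses S R := by
  simp only [Crosses, not_and_or, not_not, Finset.subset_iff, Finset.disjoint_left,
    Finset.mem_union] at *
  grind

theorem IsLaminar.mono {ℒ ℒ' : Finset (Finset α)} (hℒ : IsLaminar ℒ) (h : ℒ' ⊆ ℒ) :
    IsLaminar ℒ' :=
  fun S hS T hT => hℒ S (h hS) T (h hT)

theorem IsLaminar.subset_or_disjoint_of_maximal {ℒ : Finset (Finset α)} (hℒ : IsLaminar ℒ)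
    {M S : Finset α} (hM : Maximal (· ∈ ℒ) M) (hS : S ∈ ℒ) : S ⊆ M ∨ Disjoint S M := by
  by_contra! h
  exact hℒ S hS M hM.1 ⟨h.1, fun hMS => h.1 (hM.2 hS hMS), h.2⟩

theorem IsLaminar.card_le [DecidableEq α] {ℒ : Finset (Finset α)} {U : Finset α}
    (hℒ : IsLaminar ℒ) (hU : ∀ S ∈ ℒ, S.Nonempty ∧ S ⊆ U) : #ℒ ≤ 2 * #U - 1 := by
  induction hk : #U using Nat.strong_induction_on generalizing ℒ U with
  | _ k ih =>
  have herase := pred_card_le_card_erase (s := ℒ) (a := U)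
  rcases (ℒ.erase U).eq_empty_or_nonempty with hempty | hne
  · rw [hempty, card_empty] at herase
    rcases ℒ.eq_empty_or_nonempty with rfl | ⟨S, hS⟩
    · simp
    · have := card_pos.mpr ((hU S hS).1.mono (hU S hS).2)
      omega
  obtain ⟨M, hM⟩ := (ℒ.erase U).exists_maximal hne
  have hML : M ∈ ℒ := mem_of_mem_erase hM.1
  have hMU : M ⊂ U := ssubset_of_subset_of_ne (hU M hML).2 (ne_of_mem_erase hM.1)
  have hMpos := card_pos.mpr (hU M hML).1
  have hUM := card_sdiff_of_subset hMU.subset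
  have hMlt := card_lt_card hMU
  have hA := ih #M (hk ▸ hMlt) (ℒ := (ℒ.erase U).filter (· ⊆ M))
    ((hℒ.mono (erase_subset _ _)).mono (filter_subset _ _))
    (fun S hS => ⟨(hU S (mem_of_mem_erase (mem_filter.mp hS).1)).1, (mem_filter.mp hS).2⟩) rfl
  have hB := ih #(U \ M) (by omega) (ℒ := (ℒ.erase U).filter (¬· ⊆ M))
    ((hℒ.mono (erase_subset _ _)).mono (filter_subset _ _))
    (fun S hS => by
      obtain ⟨hS, hSM⟩ := mem_filter.mp hS
      have hSU := hU S (mem_of_mem_erase hS)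
      exact ⟨hSU.1, subset_sdiff.mpr ⟨hSU.2,
        ((hℒ.mono (erase_subset _ _)).subset_or_disjoint_of_maximal hM hS).resolve_left hSM⟩⟩)
    rfl
  have hsplit := card_filter_add_card_filter_not (s := ℒ.erase U) (· ⊆ M)
  omega

theorem card_filter_crosses_lt [DecidableEq α] {ℒ : Finset (Finset α)} {S T X : Finset α}
    (hT : T ∈ ℒ) (hST : Crosses S T) (hXT : ¬Crosses X T)
    (hX : ∀ R ∈ ℒ, Crosses X R → Crosses S R) :
    #(ℒ.filter (Crosses X)) < #(ℒ.filter (Crosses S)) := by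
  refine card_lt_card ((ssubset_iff_of_subset fun R hR => ?_).mpr ⟨T, ?_, ?_⟩)
  · simp only [mem_filter] at hR ⊢
    exact ⟨hR.1, hX R hR.1 hR.2⟩
  · exact mem_filter.mpr ⟨hT, hST⟩
  · exact fun h => hXT (mem_filter.mp h).2

theorem exists_isLaminar_maximal (𝒯 : Finset (Finset α)) :
    ∃ ℒ ⊆ 𝒯, IsLaminar ℒ ∧ ∀ S ∈ 𝒯, (∀ T ∈ ℒ, ¬Crosses S T) → S ∈ ℒ := by
  classical
  obtain ⟨ℒ, hℒ, hmax⟩ :=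
    (𝒯.powerset.filter IsLaminar).exists_maximal ⟨∅, by simp [IsLaminar]⟩
  simp only [mem_filter, mem_powerset] at hℒ hmax
  refine ⟨ℒ, hℒ.1, hℒ.2, fun S hS hSℒ => ?_⟩
  have hins : IsLaminar (insert S ℒ) := by
    intro A hA B hB
    rcases mem_insert.mp hA with rfl | hAℒ
    · rcases mem_insert.mp hB with rfl | hBℒ
      · exact not_crosses_of_subset_left le_rfl
      · exact hSℒ B hBℒ
    · rcases mem_insert.mp hB with rfl | hBℒ
      · exact fun h => hSℒ A hAℒ h.symm
      · exact hℒ.2 A hAℒ B hBℒ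
  exact hmax ⟨insert_subset hS hℒ.1, hins⟩ (subset_insert _ _) (mem_insert_self _ _)

theorem IsLaminar.eq_zero_of_maximal [DecidableEq α] {M : Type*} [AddCommGroup M]
    {P : Finset α → Prop} {f : Finset α → M} {ℒ : Finset (Finset α)}
    (hP : ∀ S T, P S → P T → Crosses S T → P (S ∩ T) ∧ P (S ∪ T))
    (hf : ∀ S T, P S → P T → Crosses S T → f S + f T = f (S ∩ T) + f (S ∪ T))
    (hℒ : IsLaminar ℒ) (hℒP : ∀ T ∈ ℒ, P T)
    (hmax : ∀ S, P S → (∀ T ∈ ℒ, ¬Crosses S T) → S ∈ ℒ)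
    (h0 : ∀ T ∈ ℒ, f T = 0) {S : Finset α} (hS : P S) : f S = 0 := by
  induction hk : #(ℒ.filter (Crosses S)) using Nat.strong_induction_on generalizing S with
  | _ k ih =>
  by_cases hcross : ∃ T ∈ ℒ, Crosses S T
  · obtain ⟨T, hT, hST⟩ := hcross
    obtain ⟨hPi, hPu⟩ := hP S T hS (hℒP T hT) hST
    have hfi := ih _ (hk ▸ card_filter_crosses_lt hT hST
      (not_crosses_of_subset_left inter_subset_right)
      fun R hR => Crosses.of_inter (hℒ R hR T hT) hST) hPi rfl
    have hfu := ih _ (hk ▸ card_filter_crosses_lt hT hST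
      (not_crosses_of_subset_right subset_union_right)
      fun R hR => Crosses.of_union (hℒ R hR T hT) hST) hPu rfl
    simpa [hfi, hfu, h0 T hT] using hf S T hS (hℒP T hT) hST
  · push Not at hcross
    exact h0 S (hmax S hS hcross)

end Laminar

theorem Matrix.exists_mulVec_eq_zero_of_card_lt {ι κ K : Type*} [Field K] [Fintype ι]
    [Fintype κ] (A : Matrix ι κ K) (h : Fintype.card ι < Fintype.card κ) :
    ∃ v ≠ 0, A *ᵥ v = 0 := by
  obtain ⟨v, hv, hv0⟩ := (Submodule.ne_bot_iff _).mp
    (LinearMap.ker_ne_bot_of_finrank_lt (f := A.mulVecLin) (by simpa using h))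
  exact ⟨v, hv0, hv⟩

theorem exists_ne_zero_orthogonal_of_card_lt {ι κ K : Type*} [Field K] [Fintype κ]
    [DecidableEq κ]    (s : Finset ι) (v : ι → κ → K) (F : Finset κ) (h : #s < #F) :
    ∃ d ≠ 0, (∀ k ∉ F, d k = 0) ∧ ∀ i ∈ s, v i ⬝ᵥ d = 0 := by
  let A : Matrix (s ⊕ ↥Fᶜ) κ K := Matrix.of (Sum.elim (fun i => v i) fun k => Pi.single k 1)
  have hcard : Fintype.card (s ⊕ ↥Fᶜ) < Fintype.card κ := by
    simp only [Fintype.card_sum, Fintype.card_coe, card_compl]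
    have := card_le_univ F
    omega
  obtain ⟨d, hd0, hAd⟩ := A.exists_mulVec_eq_zero_of_card_lt hcard
  refine ⟨d, hd0, fun k hk => ?_, fun i hi => ?_⟩
  · simpa [A, Matrix.mulVec] using congrFun hAd (Sum.inr ⟨k, mem_compl.mpr hk⟩)
  · simpa [A, Matrix.mulVec] using congrFun hAd (Sum.inl ⟨i, hi⟩)

theorem dotProduct_eq_of_dotProduct_eq {κ : Type*} [Fintype κ] {u w x y : κ → ℝ}
    (huw : u ≤ w) (hx : 0 ≤ x) (h : u ⬝ᵥ x = w ⬝ᵥ x)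
    (hy : ∀ k, x k = 0 → y k = 0) : u ⬝ᵥ y = w ⬝ᵥ y := by
  have hterm : ∀ k, (w k - u k) * x k = 0 := by
    have hsum : ∑ k, (w k - u k) * x k = 0 := by
      simp only [sub_mul, sum_sub_distrib]
      exact sub_eq_zero.mpr h.symm
    intro k
    exact (sum_eq_zero_iff_of_nonneg fun k _ => mul_nonneg (sub_nonneg.mpr (huw k)) (hx k)).mp
      hsum k (mem_univ k)
  have : ∑ k, (w k - u k) * y k = 0 := sum_eq_zero fun k _ => by
    rcases mul_eq_zero.mp (hterm k) with h | h
    · rw [h, zero_mul]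
    · rw [hy k h, mul_zero]
  simp only [sub_mul, sum_sub_distrib] at this
  exact (sub_eq_zero.mp this).symm

section CutLP

variable {V E : Type*}

def cutVector [DecidableEq V] (ends : E → V × V) (S : Finset V) (e : E) : ℝ :=
  if ¬((ends e).1 ∈ S ↔ (ends e).2 ∈ S) then 1 else 0

def IsCutLPFeasible [Fintype V] [DecidableEq V] [Fintype E] (ends : E → V × V) (x : E → ℝ) :
    Prop :=
  (∀ e, 0 ≤ x e ∧ x e ≤ 1) ∧ ∀ S : Finset V, S.Nonempty → S ≠ univ → 2 ≤ cutVector ends S ⬝ᵥ x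

def IsTightCut [Fintype V] [DecidableEq V] [Fintype E] (ends : E → V × V) (x : E → ℝ)
    (S : Finset V) : Prop :=
  S.Nonempty ∧ S ≠ univ ∧ cutVector ends S ⬝ᵥ x = 2

theorem cutVector_dotProduct [DecidableEq V] [Fintype E] {ends : E → V × V} (S : Finset V)
    (x : E → ℝ) :
    cutVector ends S ⬝ᵥ x =
      ∑ e ∈ univ.filter (fun e => ¬((ends e).1 ∈ S ↔ (ends e).2 ∈ S)), x e := by
  simp [dotProduct, cutVector, sum_filter]

theorem cutVector_compl [Fintype V] [DecidableEq V] {ends : E → V × V} (S : Finset V) :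
    cutVector ends Sᶜ = cutVector ends S := by
  ext e
  simp only [cutVector, mem_compl, not_iff_not]

theorem cutVector_inter_add_union_le [DecidableEq V] {ends : E → V × V} (S T : Finset V)
    (e : E) :
    cutVector ends (S ∩ T) e + cutVector ends (S ∪ T) e ≤
      cutVector ends S e + cutVector ends T e := by
  unfold cutVector
  simp only [mem_inter, mem_union]
  split_ifs <;> norm_num <;> tauto

end CutLP

section Extreme

open Filter Topology

variable {V E : Type*} [Fintype V] [DecidableEq V] [Fintype E] {ends : E → V × V} {x d : E → ℝ}

theorem IsTightCut.inter_union (hx : IsCutLPFeasible ends x) {S T : Finset V}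
    (hS : IsTightCut ends x S) (hT : IsTightCut ends x T) (hi : (S ∩ T).Nonempty)
    (hu : S ∪ T ≠ univ) :
    IsTightCut ends x (S ∩ T) ∧ IsTightCut ends x (S ∪ T) ∧
      (cutVector ends (S ∩ T) + cutVector ends (S ∪ T)) ⬝ᵥ x =
        (cutVector ends S + cutVector ends T) ⬝ᵥ x := by
  have hle : (cutVector ends (S ∩ T) + cutVector ends (S ∪ T)) ⬝ᵥ x ≤
      (cutVector ends S + cutVector ends T) ⬝ᵥ x :=
    dotProduct_le_dotProduct_of_nonneg_right (cutVector_inter_add_union_le S T)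
      fun e => (hx.1 e).1
  have hi' : S ∩ T ≠ univ := fun h => hS.2.1 (univ_subset_iff.mp (h ▸ inter_subset_left))
  have hu' : (S ∪ T).Nonempty := hS.1.mono subset_union_left
  have hi2 := hx.2 _ hi hi'
  have hu2 := hx.2 _ hu' hu
  rw [add_dotProduct, add_dotProduct, hS.2.2, hT.2.2] at hle
  exact ⟨⟨hi, hi', by linarith⟩, ⟨hu', hu, by linarith⟩, by
    rw [add_dotProduct, add_dotProduct, hS.2.2, hT.2.2]; linarith⟩

theorem IsTightCut.compl {S : Finset V} (hS : IsTightCut ends x S) : IsTightCut ends x Sᶜ :=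
  ⟨nonempty_iff_ne_empty.mpr (compl_eq_empty_iff S |>.not.mpr hS.2.1),
    (compl_ne_univ_iff_nonempty S).mpr hS.1, by rw [cutVector_compl]; exact hS.2.2⟩

theorem dotProduct_eq_zero_of_isTightCut (hx : IsCutLPFeasible ends x) (r : V)
    {ℒ : Finset (Finset V)} (hℒ : IsLaminar ℒ) (hℒT : ∀ T ∈ ℒ, IsTightCut ends x T ∧ r ∉ T)
    (hmax : ∀ S, IsTightCut ends x S ∧ r ∉ S → (∀ T ∈ ℒ, ¬Crosses S T) → S ∈ ℒ)
    (hd : ∀ e, x e = 0 → d e = 0) (hdℒ : ∀ T ∈ ℒ, cutVector ends T ⬝ᵥ d = 0)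
    {S : Finset V} (hS : IsTightCut ends x S) : cutVector ends S ⬝ᵥ d = 0 := by
  have huncross {S T : Finset V} (hS : IsTightCut ends x S ∧ r ∉ S)
      (hT : IsTightCut ends x T ∧ r ∉ T) (hST : Crosses S T) :=
    hS.1.inter_union hx hT.1 (not_disjoint_iff_nonempty_inter.mp hST.2.2)
      fun h => hS.2 ((mem_union.mp (h ▸ mem_univ r)).resolve_right hT.2)
  have hrooted : ∀ {S : Finset V}, IsTightCut ends x S ∧ r ∉ S → cutVector ends S ⬝ᵥ d = 0 :=
    hℒ.eq_zero_of_maximal (P := fun S => IsTightCut ends x S ∧ r ∉ S)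
      (fun S T hS hT hST => ⟨⟨(huncross hS hT hST).1, fun h => hS.2 (mem_inter.mp h).1⟩,
        ⟨(huncross hS hT hST).2.1, fun h => (mem_union.mp h).elim hS.2 hT.2⟩⟩)
      (fun S T hS hT hST => by
        simpa only [add_dotProduct] using (dotProduct_eq_of_dotProduct_eq
          (u := cutVector ends (S ∩ T) + cutVector ends (S ∪ T))
          (w := cutVector ends S + cutVector ends T)
          (cutVector_inter_add_union_le S T) (fun e => (hx.1 e).1)
          (huncross hS hT hST).2.2 hd).symm)
      hℒT hmax hdℒ
  by_cases hr : r ∈ S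
  · rw [← cutVector_compl]
    exact hrooted ⟨hS.compl, notMem_compl.mpr hr⟩
  · exact hrooted ⟨hS, hr⟩

theorem eventually_isCutLPFeasible_add_smul (hx : IsCutLPFeasible ends x)
    (hfrac : ∀ e, d e ≠ 0 → 0 < x e ∧ x e < 1)
    (htight : ∀ S, IsTightCut ends x S → cutVector ends S ⬝ᵥ d = 0) :
    ∀ᶠ t in 𝓝 (0 : ℝ), IsCutLPFeasible ends (x + t • d) := by
  have hlim (a b : ℝ) : Tendsto (fun t : ℝ => a + t * b) (𝓝 0) (𝓝 a) := by
    simpa using ((continuous_mul_const b).const_add a).tendsto 0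
  refine (eventually_all.mpr fun e => ?_).and (eventually_all.mpr fun S => ?_)
  · simp only [Pi.add_apply, Pi.smul_apply, smul_eq_mul]
    by_cases hde : d e = 0
    · simpa [hde] using hx.1 e
    · obtain ⟨h0, h1⟩ := hfrac e hde
      filter_upwards [(hlim _ (d e)).eventually_const_lt h0,
        (hlim _ (d e)).eventually_lt_const h1] with t ht0 ht1 using ⟨ht0.le, ht1.le⟩
  · simp only [dotProduct_add, dotProduct_smul, smul_eq_mul]
    by_cases hS : S.Nonempty ∧ S ≠ univ
    · by_cases htS : cutVector ends S ⬝ᵥ x = 2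
      · simp [htS, htight S ⟨hS.1, hS.2, htS⟩]
      · filter_upwards [(hlim _ (cutVector ends S ⬝ᵥ d)).eventually_const_lt
          (lt_of_le_of_ne (hx.2 S hS.1 hS.2) (Ne.symm htS))] with t ht using fun _ _ => ht.le
    · exact Eventually.of_forall fun _ h1 h2 => absurd ⟨h1, h2⟩ hS

theorem eq_zero_of_extreme (hx : IsCutLPFeasible ends x)
    (hext : ∀ y z, IsCutLPFeasible ends y → IsCutLPFeasible ends z →
      (∀ e, x e = (y e + z e) / 2) → y = z)
    (hfrac : ∀ e, d e ≠ 0 → 0 < x e ∧ x e < 1)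
    (htight : ∀ S, IsTightCut ends x S → cutVector ends S ⬝ᵥ d = 0) : d = 0 := by
  have hneg := eventually_isCutLPFeasible_add_smul hx (d := -d) (by simpa using hfrac)
    (by simpa using htight)
  obtain ⟨t, ⟨hplus, hminus⟩, ht⟩ :=
    (((eventually_isCutLPFeasible_add_smul hx hfrac htight).and hneg).filter_mono
      nhdsWithin_le_nhds |>.and self_mem_nhdsWithin).exists (f := 𝓝[>] 0)
  have heq := hext _ _ hplus hminus fun e => by simp; ring
  funext e
  have := congrFun heq e
  simp only [Pi.add_apply, Pi.smul_apply, Pi.neg_apply, smul_eq_mul] at this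
  have : t * d e = 0 := by linarith
  exact (mul_eq_zero.mp this).resolve_left (ne_of_gt ht)

theorem card_fractional_le (hx : IsCutLPFeasible ends x)
    (hext : ∀ y z, IsCutLPFeasible ends y → IsCutLPFeasible ends z →
      (∀ e, x e = (y e + z e) / 2) → y = z) (r : V) :
    #(univ.filter fun e => 0 < x e ∧ x e < 1) ≤ 2 * (Fintype.card V - 1) - 1 := by
  classical
  obtain ⟨ℒ, hℒ𝒯, hℒ, hmax⟩ :=
    exists_isLaminar_maximal (univ.filter fun S => IsTightCut ends x S ∧ r ∉ S)
  have hℒT : ∀ T ∈ ℒ, IsTightCut ends x T ∧ r ∉ T := fun T hT => (mem_filter.mp (hℒ𝒯 hT)).2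
  have hcardℒ : #ℒ ≤ 2 * (Fintype.card V - 1) - 1 := by
    simpa using hℒ.card_le (U := univ.erase r) fun T hT =>
      ⟨(hℒT T hT).1.1, fun v hv => mem_erase.mpr ⟨fun h => (hℒT T hT).2 (h ▸ hv), mem_univ v⟩⟩
  refine le_trans (not_lt.mp fun hlt => ?_) hcardℒ
  obtain ⟨d, hd0, hdF, hdℒ⟩ := exists_ne_zero_orthogonal_of_card_lt ℒ (cutVector ends) _ hlt
  have hfrac : ∀ e, d e ≠ 0 → 0 < x e ∧ x e < 1 := fun e hde => by
    simpa using not_imp_comm.mp (hdF e) hde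
  refine hd0 (eq_zero_of_extreme hx hext hfrac fun S hS => ?_)
  exact dotProduct_eq_zero_of_isTightCut hx r hℒ hℒT
    (fun S hS hcross => hmax S (mem_filter.mpr ⟨mem_univ S, hS⟩) hcross)
    (fun e he => by_contra fun hde => (hfrac e hde).1.ne' he) hdℒ hS

end Extreme

/-- if x* is an extreme point of the cut LP of a graph on n ≥ 2
vertices (with edge set E and endpoints given by `ends`), then the number of
fractional edges (those with 0 < x*(e) < 1) is at most 2n - 1. -/
theorem stmt_3 {V E : Type*} [Fintype V] [DecidableEq V] [Fintype E]
    (n : ℕ) (hn : Fintype.card V = n) (hn2 : 2 ≤ n)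
    (ends : E → V × V)
    (Feasible : (E → ℝ) → Prop)
    (hFeas : ∀ x, Feasible x ↔
      ((∀ e, 0 ≤ x e ∧ x e ≤ 1) ∧
        ∀ S : Finset V, S.Nonempty → S ≠ Finset.univ →
          2 ≤ ∑ e ∈ Finset.univ.filter
              (fun e => ¬(((ends e).1 ∈ S) ↔ ((ends e).2 ∈ S))), x e))
    (x : E → ℝ) (hx : Feasible x)
    (hext : ∀ y z : E → ℝ, Feasible y → Feasible z →
      (∀ e, x e = (y e + z e) / 2) → y = z) :
    {e : E | 0 < x e ∧ x e < 1}.ncard ≤ 2 * n - 1 := by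
  have hFeas' : ∀ y, Feasible y ↔ IsCutLPFeasible ends y := by
    simpa only [IsCutLPFeasible, cutVector_dotProduct] using hFeas
  obtain ⟨r⟩ : Nonempty V := Fintype.card_pos_iff.mp (by omega)
  have hcard := card_fractional_le ((hFeas' x).mp hx)
    (fun y z hy hz => hext y z ((hFeas' y).mpr hy) ((hFeas' z).mpr hz)) r
  rw [Set.ncard_eq_toFinset_card', Set.toFinset_ofPred]
  omega
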